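/- Let V and Q be monic complex polynomials with no common roots and with deg Q − deg V = k ≥ 2, and let μ be a compactly supported probability measure on ℂ whose Cauchy transform satisfies C_μ(z)^k = V(z)/Q(z) for Lebesgue-almost every z ∈ ℂ. Suppose a ∈ ℂ is a root of Q of multiplicity exactly k, and write Q(z) = (z − a)^k·W(z) with W(a) ≠ 0. Then the mass m = μ({a}) is strictly positive and satisfies m^k = V(a)/W(a); in particular V(a)/W(a) is a positive real number and μ({a}) = |V(a)/W(a)|^{1/k}. -/

import Mathlib

/-!
Write `μ = m δ_a + ν` with `m = μ {a}` and `ν {a} = 0`, so that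
`(z - a) C_μ(z) = m + (z - a) C_ν(z)` wherever `C_μ(z)` is defined. Since
`∫_{B(c,r)} |z - ζ|⁻¹ dz ≤ 6πr` for every `ζ`, Tonelli and dominated convergence show that the
mean of `|z - a| |C_ν(z)|` over `B(a, ε)` tends to `0`. Hence there are points `z → a` at which
`C_μ(z)^k = V(z)/Q(z)` and `(z - a) C_μ(z) → m`. At these points
`((z - a) C_μ(z))^k = V(z)/W(z) → V(a)/W(a)`, so `m^k = V(a)/W(a)`, which is nonzero because `V`
and `Q` have no common root.
-/

open Polynomial MeasureTheory

noncomputable def cauchyTransform (μ : Measure ℂ) (z : ℂ) : ℂ := ∫ ζ, (z - ζ)⁻¹ ∂μ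

open Metric ENNReal Real Filter Topology Set

theorem Complex.volume_ball_eq_ofReal (c : ℂ) {r : ℝ} (hr : 0 ≤ r) :
    volume (ball c r) = ENNReal.ofReal (π * r ^ 2) := by
  rw [Complex.volume_ball, ← ENNReal.ofReal_pow hr, ← ofReal_coe_nnreal, NNReal.coe_real_pi,
    ← ENNReal.ofReal_mul (by positivity), mul_comm]

theorem lintegral_ball_zero_inv_enorm_le (r : ℝ) :
    ∫⁻ z in ball (0 : ℂ) r, ‖z‖ₑ⁻¹ ≤ ENNReal.ofReal (2 * π * r) := by
  rw [← lintegral_indicator measurableSet_ball, ← Complex.lintegral_comp_polarCoord_symm]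
  -- the Jacobian `ρ` of polar coordinates cancels `‖z‖⁻¹ = ρ⁻¹`
  have hbound : ∀ p ∈ polarCoord.target, ENNReal.ofReal p.1 •
      (ball (0 : ℂ) r).indicator (fun z => ‖z‖ₑ⁻¹) (Complex.polarCoord.symm p)
        ≤ (Ioo 0 r ×ˢ Ioo (-π) π).indicator 1 p := by
    rintro ⟨ρ, θ⟩ ⟨hρ, hθ⟩
    have hρ : 0 < ρ := hρ
    have hnorm : ‖Complex.polarCoord.symm (ρ, θ)‖ = ρ := by
      rw [Complex.norm_polarCoord_symm, abs_of_pos hρ]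
    by_cases hρr : ρ < r
    · rw [indicator_of_mem (show (ρ, θ) ∈ Ioo 0 r ×ˢ Ioo (-π) π from ⟨⟨hρ, hρr⟩, hθ⟩),
        indicator_of_mem (by rwa [mem_ball_zero_iff, hnorm]), ← ofReal_norm, hnorm, smul_eq_mul,
        ENNReal.mul_inv_cancel (by simpa using hρ) ofReal_ne_top]
      rfl
    · rw [indicator_of_notMem (by rwa [mem_ball_zero_iff, hnorm]), smul_zero]
      exact zero_le
  calc _ ≤ ∫⁻ p in polarCoord.target, (Ioo 0 r ×ˢ Ioo (-π) π).indicator 1 p :=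
        setLIntegral_mono' (polarCoord_target ▸ measurableSet_Ioi.prod measurableSet_Ioo) hbound
    _ ≤ ∫⁻ p, (Ioo 0 r ×ˢ Ioo (-π) π).indicator 1 p := setLIntegral_le_lintegral _ _
    _ = ENNReal.ofReal (2 * π * r) := by
      rw [lintegral_indicator_one (measurableSet_Ioo.prod measurableSet_Ioo),
        Measure.volume_eq_prod, Measure.prod_prod, Real.volume_Ioo, Real.volume_Ioo,
        ← ENNReal.ofReal_mul' (by linarith [pi_pos])]
      congr 1; ring

theorem lintegral_ball_inv_enorm_sub_self_le (ζ : ℂ) (r : ℝ) :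
    ∫⁻ z in ball ζ r, ‖z - ζ‖ₑ⁻¹ ≤ ENNReal.ofReal (2 * π * r) := by
  have hpre : (· - ζ) ⁻¹' ball (0 : ℂ) r = ball ζ r := by
    ext z; simp [dist_eq_norm]
  rw [← hpre, (measurePreserving_sub_right volume ζ).setLIntegral_comp_preimage measurableSet_ball
    (f := fun z => ‖z‖ₑ⁻¹) (by fun_prop)]
  exact lintegral_ball_zero_inv_enorm_le r

theorem lintegral_ball_inv_enorm_sub_le (c ζ : ℂ) (r : ℝ) :
    ∫⁻ z in ball c r, ‖z - ζ‖ₑ⁻¹ ≤ ENNReal.ofReal (6 * π * r) := by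
  rcases le_or_gt r 0 with hr | hr
  · simp [ball_eq_empty.2 hr]
  by_cases hζ : dist ζ c ≤ 2 * r
  · have hsub : ball c r ⊆ ball ζ (3 * r) := ball_subset_ball' (by rw [dist_comm]; linarith)
    calc _ ≤ ∫⁻ z in ball ζ (3 * r), ‖z - ζ‖ₑ⁻¹ := lintegral_mono_set hsub
      _ ≤ ENNReal.ofReal (2 * π * (3 * r)) := lintegral_ball_inv_enorm_sub_self_le ζ (3 * r)
      _ = ENNReal.ofReal (6 * π * r) := by ring_nf
  · have hfar : ∀ z ∈ ball c r, ‖z - ζ‖ₑ⁻¹ ≤ ENNReal.ofReal r⁻¹ := by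
      intro z hz
      rw [← ofReal_norm, ENNReal.ofReal_inv_of_pos hr]
      refine ENNReal.inv_le_inv.2 (ENNReal.ofReal_le_ofReal ?_)
      rw [mem_ball] at hz
      have := dist_triangle ζ z c
      rw [← dist_eq_norm, dist_comm]
      linarith
    calc _ ≤ ∫⁻ _ in ball c r, ENNReal.ofReal r⁻¹ := setLIntegral_mono' measurableSet_ball hfar
      _ = ENNReal.ofReal (π * r) := by
        rw [setLIntegral_const, Complex.volume_ball_eq_ofReal c hr.le,
          ← ENNReal.ofReal_mul (by positivity)]
        congr 1; field_simp
      _ ≤ ENNReal.ofReal (6 * π * r) := ENNReal.ofReal_le_ofReal (by nlinarith [pi_pos])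

theorem enorm_inv_le_inv_enorm (x : ℂ) : ‖x⁻¹‖ₑ ≤ ‖x‖ₑ⁻¹ := by
  rcases eq_or_ne x 0 with rfl | hx
  · simp
  · rw [enorm_inv hx]

theorem setLAverage_ball_enorm_sub_mul_inv_le (a ζ : ℂ) {ε : ℝ} (hε : 0 < ε) :
    ⨍⁻ z in ball a ε, ‖z - a‖ₑ * ‖z - ζ‖ₑ⁻¹ ∂volume ≤ 6 := by
  rw [setLAverage_eq]
  refine ENNReal.div_le_of_le_mul ?_
  have hnear : ∀ z ∈ ball a ε, ‖z - a‖ₑ * ‖z - ζ‖ₑ⁻¹ ≤ ENNReal.ofReal ε * ‖z - ζ‖ₑ⁻¹ := by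
    intro z hz
    gcongr
    rw [← ofReal_norm]
    exact ENNReal.ofReal_le_ofReal (mem_ball_iff_norm.1 hz).le
  calc _ ≤ ∫⁻ z in ball a ε, ENNReal.ofReal ε * ‖z - ζ‖ₑ⁻¹ :=
        setLIntegral_mono' measurableSet_ball hnear
    _ = ENNReal.ofReal ε * ∫⁻ z in ball a ε, ‖z - ζ‖ₑ⁻¹ := lintegral_const_mul' _ _ ofReal_ne_top
    _ ≤ ENNReal.ofReal ε * ENNReal.ofReal (6 * π * ε) := by
        gcongr; exact lintegral_ball_inv_enorm_sub_le a ζ ε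
    _ = 6 * volume (ball a ε) := by
        rw [Complex.volume_ball_eq_ofReal a hε.le, ← ENNReal.ofReal_mul hε.le,
          ← ENNReal.ofReal_ofNat 6, ← ENNReal.ofReal_mul (by norm_num)]
        ring_nf

theorem tendsto_setLAverage_ball_enorm_sub_mul_inv {a ζ : ℂ} (hζ : ζ ≠ a) :
    Tendsto (fun ε => ⨍⁻ z in ball a ε, ‖z - a‖ₑ * ‖z - ζ‖ₑ⁻¹ ∂volume) (𝓝[>] 0) (𝓝 0) := by
  set d := dist ζ a with hd_def
  have hd : 0 < d := dist_pos.2 hζ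
  have hbound : ∀ ε ∈ Ioo 0 (d / 2),
      ⨍⁻ z in ball a ε, ‖z - a‖ₑ * ‖z - ζ‖ₑ⁻¹ ∂volume ≤ ENNReal.ofReal (ε * (2 / d)) := by
    rintro ε ⟨hε, hεd⟩
    have hpt : ∀ z ∈ ball a ε, ‖z - a‖ₑ * ‖z - ζ‖ₑ⁻¹ ≤ ENNReal.ofReal (ε * (2 / d)) := by
      intro z hz
      rw [mem_ball] at hz
      rw [ENNReal.ofReal_mul hε.le, ← ofReal_norm, ← ofReal_norm, ← dist_eq_norm, ← dist_eq_norm]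
      gcongr
      rw [← inv_div, ENNReal.ofReal_inv_of_pos (half_pos hd)]
      refine ENNReal.inv_le_inv.2 (ENNReal.ofReal_le_ofReal ?_)
      have := dist_triangle ζ z a
      rw [dist_comm ζ z] at this
      linarith
    exact (laverage_le_essSup _).trans (essSup_le_of_ae_le (μ := volume.restrict (ball a ε)) _
      ((ae_restrict_iff' measurableSet_ball).2 (Eventually.of_forall hpt)))
  have hlim : Tendsto (fun ε : ℝ => ENNReal.ofReal (ε * (2 / d))) (𝓝[>] 0) (𝓝 0) := by
    rw [← ENNReal.ofReal_zero]
    refine ENNReal.tendsto_ofReal (tendsto_nhdsWithin_of_tendsto_nhds ?_)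
    simpa using (continuous_mul_const (2 / d)).tendsto 0
  exact tendsto_of_tendsto_of_tendsto_of_le_of_le' tendsto_const_nhds hlim
    (Eventually.of_forall fun _ => zero_le)
    (eventually_of_mem (Ioo_mem_nhdsGT (half_pos hd)) hbound)

theorem setLAverage_ball_enorm_sub_mul_lintegral_eq (ν : Measure ℂ) [SFinite ν] (a : ℂ) (ε : ℝ) :
    ⨍⁻ z in ball a ε, ‖z - a‖ₑ * ∫⁻ ζ, ‖z - ζ‖ₑ⁻¹ ∂ν ∂volume
      = ∫⁻ ζ, ⨍⁻ z in ball a ε, ‖z - a‖ₑ * ‖z - ζ‖ₑ⁻¹ ∂volume ∂ν := by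
  simp_rw [setLAverage_eq', ← lintegral_const_mul' _ _ enorm_ne_top]
  exact lintegral_lintegral_swap (by fun_prop)

theorem tendsto_setLAverage_ball_enorm_sub_mul_lintegral (ν : Measure ℂ) [IsFiniteMeasure ν]
    {a : ℂ} (hνa : ν {a} = 0) :
    Tendsto (fun ε => ⨍⁻ z in ball a ε, ‖z - a‖ₑ * ∫⁻ ζ, ‖z - ζ‖ₑ⁻¹ ∂ν ∂volume)
      (𝓝[>] 0) (𝓝 0) := by
  simp_rw [setLAverage_ball_enorm_sub_mul_lintegral_eq]
  rw [← lintegral_zero (μ := ν)]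
  refine tendsto_lintegral_filter_of_dominated_convergence (fun _ => 6) ?_ ?_ ?_ ?_
  · refine Eventually.of_forall fun ε => ?_
    simp_rw [setLAverage_eq']
    exact Measurable.lintegral_prod_left' (f := fun p : ℂ × ℂ => ‖p.1 - a‖ₑ * ‖p.1 - p.2‖ₑ⁻¹)
      (by fun_prop)
  · filter_upwards [self_mem_nhdsWithin] with ε hε
    exact Eventually.of_forall fun ζ => setLAverage_ball_enorm_sub_mul_inv_le a ζ hε
  · simpa [lintegral_const] using ENNReal.mul_ne_top ofNat_ne_top (measure_ne_top ν univ)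
  · filter_upwards [measure_eq_zero_iff_ae_notMem.1 hνa] with ζ hζ
    exact tendsto_setLAverage_ball_enorm_sub_mul_inv hζ

theorem ae_integrable_inv_sub (μ : Measure ℂ) [IsFiniteMeasure μ] :
    ∀ᵐ z ∂volume, Integrable (fun ζ => (z - ζ)⁻¹) μ := by
  have hfin : ∀ n : ℕ, ∀ᵐ z ∂volume.restrict (ball 0 n), ∫⁻ ζ, ‖z - ζ‖ₑ⁻¹ ∂μ < ∞ := by
    intro n
    refine ae_lt_top' (by fun_prop) (ne_top_of_le_ne_top ?_ (le_of_eq_of_le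
      (lintegral_lintegral_swap (by fun_prop)) (lintegral_mono fun ζ =>
        lintegral_ball_inv_enorm_sub_le 0 ζ n)))
    simpa [lintegral_const] using ENNReal.mul_ne_top ofReal_ne_top (measure_ne_top μ univ)
  rw [← Measure.restrict_univ (μ := volume), ← iUnion_ball_nat 0, ae_restrict_iUnion_iff]
  intro n
  filter_upwards [hfin n] with z hz
  exact ⟨by fun_prop, (lintegral_mono fun ζ => enorm_inv_le_inv_enorm _).trans_lt hz⟩

theorem cauchyTransform_eq_add_restrict_compl (μ : Measure ℂ) (a : ℂ) {z : ℂ}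
    (hz : Integrable (fun ζ => (z - ζ)⁻¹) μ) :
    cauchyTransform μ z = (μ {a}).toReal * (z - a)⁻¹ + cauchyTransform (μ.restrict {a}ᶜ) z := by
  unfold cauchyTransform
  conv_lhs => rw [← Measure.restrict_add_restrict_compl (μ := μ) (measurableSet_singleton a)]
  rw [integral_add_measure hz.restrict hz.restrict, Measure.restrict_singleton,
    integral_smul_measure, integral_dirac, Complex.real_smul]

theorem enorm_cauchyTransform_le (μ : Measure ℂ) (z : ℂ) :
    ‖cauchyTransform μ z‖ₑ ≤ ∫⁻ ζ, ‖z - ζ‖ₑ⁻¹ ∂μ :=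
  (enorm_integral_le_lintegral_enorm _).trans (lintegral_mono fun _ => enorm_inv_le_inv_enorm _)

theorem enorm_sub_mul_cauchyTransform_sub_le (μ : Measure ℂ) {a z : ℂ} (hza : z ≠ a)
    (hz : Integrable (fun ζ => (z - ζ)⁻¹) μ) :
    ‖(z - a) * cauchyTransform μ z - (μ {a}).toReal‖ₑ
      ≤ ‖z - a‖ₑ * ∫⁻ ζ, ‖z - ζ‖ₑ⁻¹ ∂(μ.restrict {a}ᶜ) := by
  rw [cauchyTransform_eq_add_restrict_compl μ a hz, mul_add, mul_left_comm,
    mul_inv_cancel₀ (sub_ne_zero.2 hza), mul_one, add_sub_cancel_left, enorm_mul]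
  gcongr
  exact enorm_cauchyTransform_le _ z

theorem exists_seq_tendsto_sub_mul_cauchyTransform (μ : Measure ℂ) [IsFiniteMeasure μ] (a : ℂ)
    {p : ℂ → Prop} (hp : ∀ᵐ z ∂volume, p z) :
    ∃ z : ℕ → ℂ, (∀ n, p (z n) ∧ z n ≠ a) ∧ Tendsto z atTop (𝓝 a) ∧
      Tendsto (fun n => (z n - a) * cauchyTransform μ (z n)) atTop (𝓝 ((μ {a}).toReal : ℂ)) := by
  set h : ℂ → ℝ≥0∞ := fun z => ‖z - a‖ₑ * ∫⁻ ζ, ‖z - ζ‖ₑ⁻¹ ∂(μ.restrict {a}ᶜ)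
  set good : ℂ → Prop := fun z => p z ∧ z ≠ a ∧ Integrable (fun ζ => (z - ζ)⁻¹) μ
  have hgood : ∀ᵐ z ∂volume, good z := by
    filter_upwards [hp, measure_eq_zero_iff_ae_notMem.1 (measure_singleton a),
      ae_integrable_inv_sub μ] with z hpz hza hint
    exact ⟨hpz, hza, hint⟩
  have hmeas : Measurable h := (by fun_prop : Measurable fun z : ℂ => ‖z - a‖ₑ).mul
    (Measurable.lintegral_prod_right' (f := fun q : ℂ × ℂ => ‖q.1 - q.2‖ₑ⁻¹) (by fun_prop))
  have hpoint : ∀ ε > 0, ∃ z ∈ ball a ε, good z ∧ h z ≤ ⨍⁻ z in ball a ε, h z ∂volume := by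
    intro ε hε
    have := isFiniteMeasure_restrict.2 (measure_ball_lt_top (μ := volume) (x := a) (r := ε)).ne
    have hne : volume.restrict (ball a ε) ≠ 0 := by
      simpa [Measure.restrict_eq_zero] using (measure_ball_pos volume a hε).ne'
    have hnull : volume.restrict (ball a ε) ({z | ¬ good z} ∪ (ball a ε)ᶜ) = 0 :=
      measure_union_null (ae_iff.1 (ae_restrict_of_ae hgood))
        (by rw [Measure.restrict_apply measurableSet_ball.compl, compl_inter_self, measure_empty])
    obtain ⟨z, hzN, hz⟩ := exists_notMem_null_le_laverage hne hmeas.aemeasurable hnull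
    simp only [mem_union, mem_ofPred_eq, mem_compl_iff, not_or, not_not] at hzN
    exact ⟨z, hzN.2, hzN.1, hz⟩
  choose! z hz_mem hz_good hz_le using hpoint
  have hpos : ∀ n : ℕ, 0 < 1 / ((n : ℝ) + 1) := fun n => by positivity
  have hε : Tendsto (fun n : ℕ => 1 / ((n : ℝ) + 1)) atTop (𝓝[>] 0) :=
    tendsto_nhdsWithin_iff.2 ⟨tendsto_one_div_add_atTop_nhds_zero_nat, Eventually.of_forall hpos⟩
  refine ⟨fun n => z (1 / (n + 1)), fun n => ⟨(hz_good _ (hpos n)).1, (hz_good _ (hpos n)).2.1⟩,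
    ?_, ?_⟩
  · exact tendsto_iff_dist_tendsto_zero.2 (squeeze_zero (fun _ => dist_nonneg)
      (fun n => (mem_ball.1 (hz_mem _ (hpos n))).le) tendsto_one_div_add_atTop_nhds_zero_nat)
  · have hνa : μ.restrict {a}ᶜ {a} = 0 := by
      rw [Measure.restrict_apply (measurableSet_singleton a), inter_compl_self, measure_empty]
    refine tendsto_iff_edist_tendsto_0.2 (tendsto_of_tendsto_of_tendsto_of_le_of_le
      tendsto_const_nhds ((tendsto_setLAverage_ball_enorm_sub_mul_lintegral _ hνa).comp hε)
      (fun _ => zero_le) fun n => ?_)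
    obtain ⟨-, hza, hint⟩ := hz_good _ (hpos n)
    rw [edist_eq_enorm_sub]
    exact (enorm_sub_mul_cauchyTransform_sub_le μ hza hint).trans (hz_le _ (hpos n))

theorem stmt6_general (V Q : Polynomial ℂ)
    (hcop : ∀ z : ℂ, ¬(V.eval z = 0 ∧ Q.eval z = 0))
    (k : ℕ) (hk : 2 ≤ k)
    (μ : Measure ℂ) (hp : IsProbabilityMeasure μ)
    (h : ∀ᵐ z ∂(volume : Measure ℂ), (cauchyTransform μ z) ^ k = V.eval z / Q.eval z)
    (a : ℂ) (W : Polynomial ℂ) (hfac : Q = (X - Polynomial.C a) ^ k * W)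
    (hWa : W.eval a ≠ 0) :
    0 < (μ {a}).toReal ∧
    (((μ {a}).toReal : ℂ)) ^ k = V.eval a / W.eval a ∧
    (∃ t : ℝ, 0 < t ∧ V.eval a / W.eval a = (t : ℂ)) ∧
    (μ {a}).toReal = ‖V.eval a / W.eval a‖ ^ ((1 : ℝ) / k) := by
  have hk0 : k ≠ 0 := by omega
  have hQ : ∀ z, Q.eval z = (z - a) ^ k * W.eval z := fun z => by simp [hfac]
  have hVa : V.eval a ≠ 0 := fun hVa => hcop a ⟨hVa, by simp [hQ, hk0]⟩
  obtain ⟨z, hz, hza, hlim⟩ := exists_seq_tendsto_sub_mul_cauchyTransform μ a h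
  have hpow : ∀ n, ((z n - a) * cauchyTransform μ (z n)) ^ k = V.eval (z n) / W.eval (z n) := by
    intro n
    rw [mul_pow, (hz n).1, hQ, mul_div_assoc',
      mul_div_mul_left _ _ (pow_ne_zero k (sub_ne_zero.2 (hz n).2))]
  have hmk : ((μ {a}).toReal : ℂ) ^ k = V.eval a / W.eval a := by
    refine tendsto_nhds_unique (hlim.pow k) ?_
    simp_rw [hpow]
    exact ((V.continuous.tendsto a).comp hza).div ((W.continuous.tendsto a).comp hza) hWa
  have hm0 : (μ {a}).toReal ≠ 0 := fun hm0 =>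
    div_ne_zero hVa hWa (by rw [← hmk, hm0, Complex.ofReal_zero, zero_pow hk0])
  have hm : 0 < (μ {a}).toReal := toReal_nonneg.lt_of_ne' hm0
  refine ⟨hm, hmk, ⟨_, pow_pos hm k, by rw [← hmk, Complex.ofReal_pow]⟩, ?_⟩
  rw [← hmk, norm_pow, Complex.norm_real, Real.norm_of_nonneg hm.le, one_div,
    Real.pow_rpow_inv_natCast hm.le hk0]

/-- At a root `a` of `Q` of multiplicity exactly `k`, a measure whose Cauchy transform
satisfies `C(z)^k = V(z)/Q(z)` a.e. carries a positive point mass `m = μ({a})` with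
`m^k = V(a)/W(a)` where `Q = (z-a)^k·W`; in particular `V(a)/W(a)` is a positive real
number and `μ({a}) = |V(a)/W(a)|^{1/k}`. -/
theorem stmt6 (V Q : Polynomial ℂ) (hV : V.Monic) (hQ : Q.Monic)
    (hcop : ∀ z : ℂ, ¬(V.eval z = 0 ∧ Q.eval z = 0))
    (k : ℕ) (hk : 2 ≤ k) (hdeg : Q.natDegree = V.natDegree + k)
    (μ : Measure ℂ) (hp : IsProbabilityMeasure μ)
    (hc : ∃ K : Set ℂ, IsCompact K ∧ μ Kᶜ = 0)
    (h : ∀ᵐ z ∂(volume : Measure ℂ), (cauchyTransform μ z) ^ k = V.eval z / Q.eval z)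
    (a : ℂ) (W : Polynomial ℂ) (hfac : Q = (X - Polynomial.C a) ^ k * W)
    (hWa : W.eval a ≠ 0) :
    0 < (μ {a}).toReal ∧
    (((μ {a}).toReal : ℂ)) ^ k = V.eval a / W.eval a ∧
    (∃ t : ℝ, 0 < t ∧ V.eval a / W.eval a = (t : ℂ)) ∧
    (μ {a}).toReal = ‖V.eval a / W.eval a‖ ^ ((1 : ℝ) / k) :=
  stmt6_general V Q hcop k hk μ hp h a W hfac hWa
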